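/- For every real $Q \in (0,1)$, the identity $\sum_{\ell \geq 1} 2^{-\ell} (1-Q)^{\ell - 1}\, {}_2F_1\!\left(\frac{\ell}{2}, \frac{\ell+1}{2}; 2; Q\right) = 1$ holds. -/

import Mathlib

open Real

noncomputable def poch (a : ℝ) (n : ℕ) : ℝ := (ascPochhammer ℝ n).eval a

/-- The Gauss hypergeometric series `₂F₁(a,b;c;x)`. -/
noncomputable def hyp2F1 (a b c x : ℝ) : ℝ :=
  ∑' n : ℕ, poch a n * poch b n / (poch c n * (n.factorial : ℝ)) * x ^ n

/-!
By the duplication formula `(a/2)ₙ ((a+1)/2)ₙ 4ⁿ = (a)₂ₙ`, the `n`-th term of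
`₂F₁((ℓ+1)/2, (ℓ+2)/2; 2; Q)` is `Cₙ binom(ℓ+2n, 2n) (Q/4)ⁿ`, with `Cₙ` the Catalan numbers.
All terms are nonnegative, so the double series may be summed over `ℓ` first: the negative
binomial series `∑ₗ binom(ℓ+2n, 2n) rˡ = (1-r)^(-2n-1)` at `r = (1-Q)/2` leaves
`∑ₙ Cₙ tⁿ / (1+Q)` with `t = Q/(1+Q)²`. The Catalan series `C(t)` solves `C = 1 + t C²`, whose
roots are `1+Q` and `(1+Q)/Q`; since `1 + t (1+Q)² = 1+Q`, induction bounds every partial sum by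
`1+Q`, so `C(t)` is the smaller root `1+Q` and the total is `1`.
-/

open Finset

lemma poch_succ (a : ℝ) (n : ℕ) : poch a (n + 1) = poch a n * (a + n) :=
  ascPochhammer_succ_eval n a

lemma poch_natCast_add_one (m n : ℕ) :
    poch ((m : ℝ) + 1) n = n.factorial * (m + n).choose n := by
  rw [poch, ← Nat.cast_succ, ascPochhammer_nat_eq_natCast_ascFactorial,
    Nat.ascFactorial_eq_factorial_mul_choose]
  push_cast
  ring

lemma poch_two (n : ℕ) : poch 2 n = (n + 1).factorial := by
  have h := poch_natCast_add_one 1 n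
  rw [Nat.cast_one, one_add_one_eq_two, add_comm 1 n, Nat.choose_succ_self_right] at h
  rw [h, Nat.factorial_succ]
  push_cast
  ring

lemma poch_duplication (a : ℝ) (n : ℕ) :
    poch (a / 2) n * poch ((a + 1) / 2) n * 4 ^ n = poch a (2 * n) := by
  induction n with
  | zero => simp [poch]
  | succ n ih =>
    rw [Nat.mul_succ, poch_succ, poch_succ, poch_succ, poch_succ, ← ih]
    push_cast
    ring

lemma Nat.factorial_two_mul_eq_catalan_mul (n : ℕ) :
    (2 * n).factorial = catalan n * ((n + 1).factorial * n.factorial) := by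
  rw [two_mul, ← Nat.choose_mul_factorial_mul_factorial (Nat.le_add_right n n), Nat.add_sub_cancel,
    ← two_mul, ← Nat.centralBinom_eq_two_mul_choose, ← succ_mul_catalan_eq_centralBinom,
    Nat.factorial_succ]
  ring

lemma poch_mul_poch_div_eq_catalan_mul_choose (ℓ n : ℕ) :
    poch (((ℓ : ℝ) + 1) / 2) n * poch (((ℓ : ℝ) + 2) / 2) n / (poch 2 n * n.factorial) =
      catalan n * (ℓ + 2 * n).choose (2 * n) / 4 ^ n := by
  have hdup := poch_duplication ((ℓ : ℝ) + 1) n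
  rw [poch_natCast_add_one, Nat.factorial_two_mul_eq_catalan_mul, add_assoc, one_add_one_eq_two]
    at hdup
  rw [poch_two, div_eq_div_iff (by positivity) (by positivity)]
  push_cast at hdup
  linear_combination hdup

lemma sum_range_sum_antidiagonal_le_sq {R : Type*} [CommSemiring R] [PartialOrder R]
    [IsOrderedRing R] {u : ℕ → R} (hu : 0 ≤ u) (N : ℕ) :
    ∑ n ∈ range N, ∑ p ∈ antidiagonal n, u p.1 * u p.2 ≤ (∑ i ∈ range N, u i) ^ 2 := by
  have hdisj : (range N : Set ℕ).PairwiseDisjoint antidiagonal := fun a _ b _ hab =>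
    disjoint_left.mpr fun p ha hb => by
      rw [HasAntidiagonal.mem_antidiagonal] at ha hb
      exact hab (ha.symm.trans hb)
  rw [← sum_biUnion hdisj, sq, sum_mul_sum, ← sum_product']
  refine sum_le_sum_of_subset_of_nonneg (fun p hp => ?_) fun p _ _ => mul_nonneg (hu _) (hu _)
  obtain ⟨n, hn, hp⟩ := mem_biUnion.mp hp
  rw [mem_range] at hn
  rw [HasAntidiagonal.mem_antidiagonal] at hp
  rw [mem_product, mem_range, mem_range]
  omega

lemma catalan_succ_mul_pow {R : Type*} [CommSemiring R] (t : R) (n : ℕ) :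
    (catalan (n + 1) : R) * t ^ (n + 1) =
      t * ∑ p ∈ antidiagonal n, (catalan p.1 * t ^ p.1) * (catalan p.2 * t ^ p.2) := by
  rw [catalan_succ', Nat.cast_sum, sum_mul, mul_sum]
  refine sum_congr rfl fun p hp => ?_
  rw [← HasAntidiagonal.mem_antidiagonal.mp hp]
  push_cast
  ring

lemma sum_range_catalan_mul_pow_le {t y : ℝ} (ht : 0 ≤ t) (hy : 1 + t * y ^ 2 ≤ y) (N : ℕ) :
    ∑ n ∈ range N, (catalan n : ℝ) * t ^ n ≤ y := by
  induction N with
  | zero => simp only [sum_range_zero]; nlinarith [sq_nonneg y]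
  | succ N ih =>
    have hnonneg : 0 ≤ ∑ n ∈ range N, (catalan n : ℝ) * t ^ n := by positivity
    calc ∑ n ∈ range (N + 1), (catalan n : ℝ) * t ^ n
        = 1 + t * ∑ n ∈ range N, ∑ p ∈ antidiagonal n,
            (catalan p.1 * t ^ p.1) * (catalan p.2 * t ^ p.2) := by
          simp only [sum_range_succ', catalan_succ_mul_pow, ← mul_sum, catalan_zero]
          ring
      _ ≤ 1 + t * (∑ n ∈ range N, (catalan n : ℝ) * t ^ n) ^ 2 := by
          gcongr
          exact sum_range_sum_antidiagonal_le_sq (u := fun n => (catalan n : ℝ) * t ^ n)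
            (fun n => by positivity) N
      _ ≤ 1 + t * y ^ 2 := by gcongr
      _ ≤ y := hy

lemma tsum_catalan_mul_pow_eq_one_add {t : ℝ} (ht : 0 ≤ t)
    (hs : Summable fun n => (catalan n : ℝ) * t ^ n) :
    ∑' n, (catalan n : ℝ) * t ^ n = 1 + t * (∑' n, (catalan n : ℝ) * t ^ n) ^ 2 := by
  have hnorm : Summable fun n => ‖(catalan n : ℝ) * t ^ n‖ :=
    hs.congr fun n => (Real.norm_of_nonneg (by positivity)).symm
  rw [sq, tsum_mul_tsum_eq_tsum_sum_antidiagonal_of_summable_norm hnorm hnorm, ← tsum_mul_left,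
    hs.tsum_eq_zero_add]
  simp only [catalan_succ_mul_pow, catalan_zero, Nat.cast_one, pow_zero, mul_one]

lemma hasSum_catalan_mul_pow {x : ℝ} (hx0 : 0 ≤ x) (hx1 : x < 1) :
    HasSum (fun n => (catalan n : ℝ) * (x / (1 + x) ^ 2) ^ n) (1 + x) := by
  set t := x / (1 + x) ^ 2
  have ht : 0 ≤ t := by positivity
  have hroot : 1 + t * (1 + x) ^ 2 = 1 + x := by simp only [t]; field_simp
  have hpartial := sum_range_catalan_mul_pow_le ht hroot.le
  have hs := summable_of_sum_range_le (fun n => by positivity) hpartial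
  have hle := hs.tsum_le_of_sum_range_le hpartial
  have hquad := tsum_catalan_mul_pow_eq_one_add ht hs
  set f := ∑' n, (catalan n : ℝ) * t ^ n
  have hfactor : (f - (1 + x)) * (x * f - (1 + x)) = 0 := by
    simp only [t] at hquad
    field_simp at hquad
    linear_combination -hquad
  suffices f = 1 + x from this ▸ hs.hasSum
  rcases mul_eq_zero.mp hfactor with h | h
  · linarith
  · nlinarith

lemma tsum_comm_of_nonneg_of_hasSum {α β : Type*} {f : α → β → ℝ} (hf : ∀ a b, 0 ≤ f a b)
    {s : α → ℝ} (hfs : ∀ a, HasSum (f a) (s a)) (hs : Summable s) :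
    ∑' b, ∑' a, f a b = ∑' a, s a := by
  have hsum : Summable (Function.uncurry f) := by
    refine (summable_prod_of_nonneg fun p => hf p.1 p.2).mpr ⟨fun a => (hfs a).summable, ?_⟩
    simpa only [Function.uncurry_apply_pair, (hfs _).tsum_eq] using hs
  rw [hsum.tsum_comm]
  exact tsum_congr fun a => (hfs a).tsum_eq

lemma hasSum_catalan_mul_choose_mul_geometric {Q : ℝ} (hQ0 : -1 < Q) (hQ1 : Q < 3) (n : ℕ) :
    HasSum
      (fun ℓ : ℕ => catalan n * (Q / 4) ^ n / 2 * ((ℓ + 2 * n).choose (2 * n) * ((1 - Q) / 2) ^ ℓ))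
      (catalan n * (Q / (1 + Q) ^ 2) ^ n / (1 + Q)) := by
  have hr : ‖(1 - Q) / 2‖ < 1 := by rw [Real.norm_eq_abs, abs_lt]; constructor <;> linarith
  have hvalue : catalan n * (Q / (1 + Q) ^ 2) ^ n / (1 + Q) =
      catalan n * (Q / 4) ^ n / 2 * (1 / (1 - (1 - Q) / 2) ^ (2 * n + 1)) := by
    have : 1 + Q ≠ 0 := by linarith
    rw [show 1 - (1 - Q) / 2 = (1 + Q) / 2 by ring, show (4 : ℝ) = 2 ^ 2 by norm_num]
    simp only [div_pow, ← pow_mul]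
    field_simp
    ring
  rw [hvalue]
  exact (hasSum_choose_mul_geometric_of_norm_lt_one (2 * n) hr).mul_left _

/-- Corollary 1: for `Q ∈ (0,1)`,
`∑_{ℓ≥1} 2^{-ℓ} (1-Q)^{ℓ-1} ₂F₁(ℓ/2,(ℓ+1)/2;2;Q) = 1`. -/
theorem total_progeny_sum (Q : ℝ) (hQ0 : 0 < Q) (hQ1 : Q < 1) :
    (∑' ℓ : ℕ, (1 / 2 : ℝ) ^ (ℓ + 1) * (1 - Q) ^ ℓ *
        hyp2F1 (((ℓ : ℝ) + 1) / 2) (((ℓ : ℝ) + 2) / 2) 2 Q) = 1 := by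
  have hcatalan := (hasSum_catalan_mul_pow hQ0.le hQ1).div_const (1 + Q)
  calc ∑' ℓ : ℕ, (1 / 2 : ℝ) ^ (ℓ + 1) * (1 - Q) ^ ℓ *
        hyp2F1 (((ℓ : ℝ) + 1) / 2) (((ℓ : ℝ) + 2) / 2) 2 Q
      = ∑' ℓ : ℕ, ∑' n : ℕ,
          catalan n * (Q / 4) ^ n / 2 * ((ℓ + 2 * n).choose (2 * n) * ((1 - Q) / 2) ^ ℓ) := by
        refine tsum_congr fun ℓ => ?_
        rw [hyp2F1, ← tsum_mul_left]
        refine tsum_congr fun n => ?_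
        rw [poch_mul_poch_div_eq_catalan_mul_choose]
        simp only [div_pow]
        ring
    _ = ∑' n : ℕ, catalan n * (Q / (1 + Q) ^ 2) ^ n / (1 + Q) :=
        tsum_comm_of_nonneg_of_hasSum (fun n ℓ => by positivity)
          (hasSum_catalan_mul_choose_mul_geometric (by linarith) (by linarith)) hcatalan.summable
    _ = 1 := by rw [hcatalan.tsum_eq, div_self (by positivity)]
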